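/- arXiv:2407.17926 — 7 statements merged into one kernel-verified Lean document; each statement's English description precedes it below -/
import Mathlib

section
/- Let λ > 0 and let g : [0, a] → ℝ be a continuous nonnegative function satisfying g(t) ≤ λ/2 + ∫₀ᵗ e^{-λ s} g(s)² ds for all t ∈ [0, a]. Then g(t) ≤ λ for all t ∈ [0, a]. -/
/-!
Put `u t = λ/2 + ∫₀ᵗ e^{-λs} g(s)² ds`. Since `0 ≤ g ≤ u`, `u` satisfies the Riccati inequality
`u' ≤ e^{-λt} u²`, so `1/u - e^{-λt}/λ` is nondecreasing. Its value `1/λ` at `0` then gives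
`1/u(t) ≥ 1/λ + e^{-λt}/λ > 1/λ`, i.e. `g ≤ u ≤ λ`.
-/

open Set intervalIntegral

theorem ContinuousOn.hasDerivAt_primitive_of_mem_Ioo {E : Type*} [NormedAddCommGroup E]
    [NormedSpace ℝ E] [CompleteSpace E] {f : ℝ → E} {a b t : ℝ}
    (hf : ContinuousOn f (Icc a b)) (ht : t ∈ Ioo a b) :
    HasDerivAt (fun x => ∫ s in a..x, f s) (f t) t :=
  integral_hasDerivAt_right
    ((hf.mono (Icc_subset_Icc le_rfl ht.2.le)).intervalIntegrable_of_Icc ht.1.le)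
    ((hf.mono Ioo_subset_Icc_self).stronglyMeasurableAtFilter isOpen_Ioo t ht)
    (hf.continuousAt (Icc_mem_nhds ht.1 ht.2))

theorem ContinuousOn.continuousOn_primitive_Icc {E : Type*} [NormedAddCommGroup E]
    [NormedSpace ℝ E] {f : ℝ → E} {a b : ℝ} (hf : ContinuousOn f (Icc a b)) :
    ContinuousOn (fun x => ∫ s in a..x, f s) (Icc a b) := by
  rcases le_or_gt a b with hab | hba
  · rw [← uIcc_of_le hab] at hf ⊢
    exact continuousOn_primitive_interval (hf.integrableOn_compact isCompact_uIcc)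
  · simp [Icc_eq_empty_of_lt hba]

theorem monotoneOn_inv_add_of_hasDerivAt_le_mul_sq {u u' K k : ℝ → ℝ} {s : Set ℝ}
    (hs : Convex ℝ s) (hu : ContinuousOn u s) (hK : ContinuousOn K s)
    (hpos : ∀ t ∈ s, 0 < u t) (hu' : ∀ t ∈ interior s, HasDerivAt u (u' t) t)
    (hK' : ∀ t ∈ interior s, HasDerivAt K (k t) t)
    (hle : ∀ t ∈ interior s, u' t ≤ k t * u t ^ 2) :
    MonotoneOn (fun t => (u t)⁻¹ + K t) s := by
  have hderiv : ∀ t ∈ interior s,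
      HasDerivAt (fun t => (u t)⁻¹ + K t) (-u' t / u t ^ 2 + k t) t := fun t ht =>
    ((hu' t ht).inv (hpos t (interior_subset ht)).ne').add (hK' t ht)
  refine monotoneOn_of_deriv_nonneg hs
    ((hu.inv₀ fun t ht => (hpos t ht).ne').add hK)
    (fun t ht => (hderiv t ht).differentiableAt.differentiableWithinAt) fun t ht => ?_
  have hu2 : 0 < u t ^ 2 := pow_pos (hpos t (interior_subset ht)) 2
  have := (div_le_iff₀ hu2).2 (hle t ht)
  rw [(hderiv t ht).deriv, neg_div]
  linarith

theorem stmt_0_general (a lam : ℝ) (hlam : 0 < lam) (g : ℝ → ℝ)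
    (hg : ContinuousOn g (Set.Icc 0 a))
    (hnn : ∀ t ∈ Set.Icc (0:ℝ) a, 0 ≤ g t)
    (hineq : ∀ t ∈ Set.Icc (0:ℝ) a,
      g t ≤ lam / 2 + ∫ s in (0:ℝ)..t, Real.exp (-lam * s) * (g s) ^ 2) :
    ∀ t ∈ Set.Icc (0:ℝ) a, g t ≤ lam := by
  set f : ℝ → ℝ := fun s => Real.exp (-lam * s) * g s ^ 2
  set u : ℝ → ℝ := fun t => lam / 2 + ∫ s in (0:ℝ)..t, f s with hu
  have hf : ContinuousOn f (Icc 0 a) := by fun_prop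
  have hu_pos : ∀ t ∈ Icc 0 a, 0 < u t := fun t ht =>
    add_pos_of_pos_of_nonneg (half_pos hlam)
      (integral_nonneg ht.1 fun s _ => by positivity)
  have hu' : ∀ t ∈ Ioo 0 a, HasDerivAt u (f t) t := fun t ht =>
    (hf.hasDerivAt_primitive_of_mem_Ioo ht).const_add (lam / 2)
  have hK' : ∀ t, HasDerivAt (fun t => -Real.exp (-lam * t) / lam) (Real.exp (-lam * t)) t :=
    fun t => ((((hasDerivAt_id' t).const_mul (-lam)).exp.neg).div_const lam).congr_deriv
      (by field_simp)
  have hriccati : ∀ t ∈ Icc 0 a, f t ≤ Real.exp (-lam * t) * u t ^ 2 := fun t ht =>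
    mul_le_mul_of_nonneg_left (pow_le_pow_left₀ (hnn t ht) (hineq t ht) 2) (Real.exp_pos _).le
  have hu_cont : ContinuousOn u (Icc 0 a) :=
    continuousOn_const.add hf.continuousOn_primitive_Icc
  have hmono := monotoneOn_inv_add_of_hasDerivAt_le_mul_sq (convex_Icc 0 a) hu_cont
    (by fun_prop) hu_pos (by simpa only [interior_Icc] using hu') (fun t _ => hK' t)
    (fun t ht => hriccati t (interior_subset ht))
  intro t ht
  have hu0 : u 0 = lam / 2 := by simp [hu]
  have key : (u 0)⁻¹ + -Real.exp (-lam * 0) / lam ≤ (u t)⁻¹ + -Real.exp (-lam * t) / lam :=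
    hmono ⟨le_rfl, ht.1.trans ht.2⟩ ht ht.1
  rw [hu0, mul_zero, Real.exp_zero] at key
  have hinv : lam⁻¹ ≤ (u t)⁻¹ := by
    have : 0 < Real.exp (-lam * t) / lam := by positivity
    calc lam⁻¹ = (lam / 2)⁻¹ + -1 / lam := by field_simp; ring
      _ ≤ (u t)⁻¹ + -Real.exp (-lam * t) / lam := key
      _ ≤ (u t)⁻¹ := by rw [neg_div]; linarith
  exact (hineq t ht).trans ((inv_le_inv₀ hlam (hu_pos t ht)).mp hinv)

/-- Nonlinear Gronwall-type inequality: if a continuous nonnegative `g` on `[0, a]`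
satisfies `g t ≤ λ/2 + ∫₀ᵗ e^{-λ s} g(s)² ds`, then `g t ≤ λ` on `[0, a]`. -/
theorem stmt_0 (a lam : ℝ) (ha : 0 < a) (hlam : 0 < lam) (g : ℝ → ℝ)
    (hg : ContinuousOn g (Set.Icc 0 a))
    (hnn : ∀ t ∈ Set.Icc (0:ℝ) a, 0 ≤ g t)
    (hineq : ∀ t ∈ Set.Icc (0:ℝ) a,
      g t ≤ lam / 2 + ∫ s in (0:ℝ)..t, Real.exp (-lam * s) * (g s) ^ 2) :
    ∀ t ∈ Set.Icc (0:ℝ) a, g t ≤ lam :=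
  stmt_0_general a lam hlam g hg hnn hineq
end

section
/- Let K, λ > 0, let T > 0, and let h : [0, T] → ℝ be a continuous nonnegative function satisfying h(t) ≤ K e^{-λ(T-t)} + K e^{-λ(T-t)} ∫ₜᵀ (h(s) + 1) ds for all t ∈ [0, T]. Then there exists a constant K' > 0 depending only on K and λ (not on T) such that h(t) ≤ K' e^{-(λ/2)(T-t)} for all t ∈ [0, T]. -/
/-!
With `G t = 1 + ∫ₜᵀ (h + 1)` the hypothesis reads `h ≤ κ G` for `κ t = K e^{-λ(T-t)}`, so
`G' = -(h + 1) ≥ -κ G - 1`. Multiplying by the integrating factor `e^{Φ}`, where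
`Φ t = (K/λ) e^{-λ(T-t)}` is a primitive of `κ`, gives `(G e^{Φ})' ≥ -e^{Φ} ≥ -e^{Φ(T)}`, hence
`G t ≤ e^{K/λ} (1 + (T - t))` since `0 ≤ Φ ≤ K/λ`. The polynomial factor `1 + (T - t)` is then
absorbed by half of the exponential decay rate.
-/

open Real Set

theorem hasDerivAt_integral_left_of_continuousOn {f : ℝ → ℝ} {a b x : ℝ}
    (hf : ContinuousOn f (Icc a b)) (hx : x ∈ Ioo a b) :
    HasDerivAt (fun u => ∫ s in u..b, f s) (-f x) x := by
  have hint : IntervalIntegrable f MeasureTheory.volume x b := by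
    refine (hf.mono ?_).intervalIntegrable
    rw [uIcc_of_le hx.2.le]
    exact Icc_subset_Icc_left hx.1.le
  exact intervalIntegral.integral_hasDerivAt_left hint
    ((hf.mono Ioo_subset_Icc_self).stronglyMeasurableAtFilter isOpen_Ioo x hx)
    (hf.continuousAt (Icc_mem_nhds hx.1 hx.2))

theorem continuousOn_integral_left {f : ℝ → ℝ} {a b : ℝ} (hab : a ≤ b)
    (hf : ContinuousOn f (Icc a b)) :
    ContinuousOn (fun u => ∫ s in u..b, f s) (Icc a b) := by
  rw [← uIcc_of_le hab] at hf ⊢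
  exact intervalIntegral.continuousOn_primitive_interval_left
    (hf.integrableOn_compact isCompact_uIcc)

theorem le_exp_sub_mul_of_deriv_ge {G G' Φ κ : ℝ → ℝ} {a b t : ℝ}
    (hGc : ContinuousOn G (Icc a b)) (hΦc : ContinuousOn Φ (Icc a b))
    (hG : ∀ x ∈ Ioo a b, HasDerivAt G (G' x) x) (hΦ : ∀ x ∈ Ioo a b, HasDerivAt Φ (κ x) x)
    (hΦmono : MonotoneOn Φ (Icc a b)) (hG' : ∀ x ∈ Ioo a b, -(κ x * G x) - 1 ≤ G' x)
    (ht : t ∈ Icc a b) :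
    G t ≤ exp (Φ b - Φ t) * (G b + (b - t)) := by
  have hb : b ∈ Icc a b := right_mem_Icc.2 (ht.1.trans ht.2)
  set Q : ℝ → ℝ := fun x => G x * exp (Φ x) + exp (Φ b) * x
  have hQ' : ∀ x ∈ interior (Icc a b),
      HasDerivAt Q (G' x * exp (Φ x) + G x * (exp (Φ x) * κ x) + exp (Φ b) * 1) x := by
    rw [interior_Icc]
    exact fun x hx => ((hG x hx).mul (hΦ x hx).exp).add ((hasDerivAt_id x).const_mul _)
  have hQmono : MonotoneOn Q (Icc a b) := by
    refine monotoneOn_of_hasDerivWithinAt_nonneg (convex_Icc a b)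
      ((hGc.mul hΦc.rexp).add (continuousOn_const.mul continuousOn_id))
      (fun x hx => (hQ' x hx).hasDerivWithinAt) ?_
    rw [interior_Icc]
    intro x hx
    have hΦb : exp (Φ x) ≤ exp (Φ b) := exp_le_exp.2 (hΦmono (Ioo_subset_Icc_self hx) hb hx.2.le)
    have := mul_le_mul_of_nonneg_right (hG' x hx) (exp_pos (Φ x)).le
    linarith
  have hQ := hQmono ht hb ht.2
  simp only [Q] at hQ
  rw [exp_sub, div_mul_eq_mul_div, le_div_iff₀ (exp_pos _)]
  linarith

theorem one_add_mul_exp_neg_le {lam s : ℝ} (hlam : 0 < lam) (hs : 0 ≤ s) :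
    (1 + s) * exp (-lam * s) ≤ (1 + 2 / lam) * exp (-(lam / 2) * s) := by
  have hhalf : (1 + s) * exp (-(lam / 2) * s) ≤ 1 + 2 / lam := by
    rw [neg_mul, exp_neg, ← div_eq_mul_inv, div_le_iff₀ (exp_pos _)]
    have h2 : (1 + 2 / lam) * (lam / 2 * s + 1) = 1 + s + 2 / lam + lam / 2 * s := by
      field_simp; ring
    have := mul_le_mul_of_nonneg_left (add_one_le_exp (lam / 2 * s))
      (by positivity : 0 ≤ 1 + 2 / lam)
    have : 0 ≤ 2 / lam + lam / 2 * s := by positivity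
    linarith
  calc (1 + s) * exp (-lam * s)
      = (1 + s) * exp (-(lam / 2) * s) * exp (-(lam / 2) * s) := by
        rw [mul_assoc, ← exp_add]; ring_nf
    _ ≤ (1 + 2 / lam) * exp (-(lam / 2) * s) := by gcongr

theorem one_add_integral_le_of_le_exp_mul {K lam a T t : ℝ} {h : ℝ → ℝ} (hK : 0 ≤ K)
    (hlam : 0 < lam) (hcont : ContinuousOn h (Icc a T))
    (hineq : ∀ x ∈ Icc a T, h x ≤ K * exp (-lam * (T - x)) * (1 + ∫ s in x..T, (h s + 1)))
    (ht : t ∈ Icc a T) :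
    1 + ∫ s in t..T, (h s + 1) ≤ exp (K / lam) * (1 + (T - t)) := by
  set G : ℝ → ℝ := fun x => 1 + ∫ s in x..T, (h s + 1)
  set Φ : ℝ → ℝ := fun x => K / lam * exp (-lam * (T - x))
  have hh : ContinuousOn (fun s => h s + 1) (Icc a T) := hcont.add continuousOn_const
  have hΦ : ∀ x, HasDerivAt Φ (K * exp (-lam * (T - x))) x := fun x =>
    ((((hasDerivAt_id x).const_sub T).const_mul (-lam)).exp.const_mul (K / lam)).congr_deriv
      (by field_simp; rfl)
  have hΦT : Φ T = K / lam := by simp [Φ]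
  calc G t ≤ exp (Φ T - Φ t) * (G T + (T - t)) := by
        refine le_exp_sub_mul_of_deriv_ge (G' := fun x => -(h x + 1))
          (continuousOn_const.add (continuousOn_integral_left (ht.1.trans ht.2) hh))
          (fun x _ => (hΦ x).continuousAt.continuousWithinAt)
          (fun x hx => (hasDerivAt_integral_left_of_continuousOn hh hx).const_add 1)
          (fun x _ => hΦ x) ?_ ?_ ht
        · intro x _ y _ hxy
          simp only [Φ]
          gcongr K / lam * exp ?_
          nlinarith
        · intro x hx
          have := hineq x (Ioo_subset_Icc_self hx)
          simp only [G]
          linarith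
    _ ≤ exp (K / lam) * (1 + (T - t)) := by
        simp only [G, intervalIntegral.integral_same, add_zero, hΦT]
        gcongr
        · linarith [ht.2]
        · simp only [Φ]; linarith [show 0 ≤ K / lam * exp (-lam * (T - t)) by positivity]

/-- An integral inequality with exponentially decaying kernel gives uniform
exponential decay with rate `λ/2`, with a constant independent of `T`. -/
theorem stmt_1 (K lam : ℝ) (hK : 0 < K) (hlam : 0 < lam) :
    ∃ K' > (0:ℝ), ∀ T : ℝ, 0 < T → ∀ h : ℝ → ℝ,
      ContinuousOn h (Set.Icc 0 T) →
      (∀ t ∈ Set.Icc (0:ℝ) T, 0 ≤ h t) →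
      (∀ t ∈ Set.Icc (0:ℝ) T,
        h t ≤ K * Real.exp (-lam * (T - t)) +
          K * Real.exp (-lam * (T - t)) * ∫ s in t..T, (h s + 1)) →
      ∀ t ∈ Set.Icc (0:ℝ) T, h t ≤ K' * Real.exp (-(lam / 2) * (T - t)) := by
  refine ⟨K * exp (K / lam) * (1 + 2 / lam), by positivity, ?_⟩
  intro T _ h hcont _ hineq t ht
  have hineq' : ∀ x ∈ Icc 0 T,
      h x ≤ K * exp (-lam * (T - x)) * (1 + ∫ s in x..T, (h s + 1)) := fun x hx => by
    rw [mul_add, mul_one]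
    exact hineq x hx
  calc h t ≤ K * exp (-lam * (T - t)) * (1 + ∫ s in t..T, (h s + 1)) := hineq' t ht
    _ ≤ K * exp (-lam * (T - t)) * (exp (K / lam) * (1 + (T - t))) := by
        gcongr
        exact one_add_integral_le_of_le_exp_mul hK.le hlam hcont hineq' ht
    _ = K * exp (K / lam) * ((1 + (T - t)) * exp (-lam * (T - t))) := by ring
    _ ≤ K * exp (K / lam) * ((1 + 2 / lam) * exp (-(lam / 2) * (T - t))) :=
        mul_le_mul_of_nonneg_left (one_add_mul_exp_neg_le hlam (sub_nonneg.2 ht.2))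
          (by positivity)
    _ = K * exp (K / lam) * (1 + 2 / lam) * exp (-(lam / 2) * (T - t)) := by ring
end

section
/- Let A : ℝ → Matrix (Fin n) (Fin n) ℝ be continuous and τ-periodic, and suppose the fundamental solution Φ of Φ'(t) = A(t)Φ(t), Φ(0) = I satisfies ‖Φ(t)Φ(s)^{-1}‖ ≤ K e^{-λ(t-s)} for all 0 ≤ s ≤ t and some K, λ > 0. Let q : ℝ → ℝⁿ be continuous, bounded, and τ-periodic. Then the ODE η'(t) + A(t)ᵀ η(t) + q(t) = 0 on [0, τ] with boundary condition η(0) = η(τ) admits a unique solution. -/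
/-!
Let `Φ` be the fundamental matrix. Uniqueness for linear ODEs makes every `Φ t` invertible and,
by periodicity of `A`, gives `Φ (t + τ) = Φ t * Φ τ`, hence `Φ (m τ) = Φ τ ^ m`. Exponential
stability then forces `Φ τ ^ m x → 0`, so `Φ τ` has no nonzero fixed vector and the monodromy
`1 - Φ τ` is invertible. The substitution `u = Φᵀ η` turns the adjoint equation into
`u' = -Φᵀ q`, solved by integration, and the condition `η 0 = η τ` becomes the uniquely solvable
linear equation `(1 - Φ τ)ᵀ u 0 = ∫₀^τ Φᵀ q`.
-/

open Matrix Set Filter Topology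
open scoped Matrix.Norms.Elementwise

section LinearODE

variable {E : Type*} [NormedAddCommGroup E] [NormedSpace ℝ E]

theorem ODE_solution_unique_of_linear {B : ℝ → E →L[ℝ] E} (hB : Continuous B)
    {f g : ℝ → E} (hf : ∀ t, HasDerivAt f (B t (f t)) t) (hg : ∀ t, HasDerivAt g (B t (g t)) t)
    {t₀ : ℝ} (h : f t₀ = g t₀) : f = g := by
  funext t
  obtain ⟨a, b, ht, ht₀⟩ : ∃ a b, t ∈ Ioo a b ∧ t₀ ∈ Ioo a b :=
    ⟨min t t₀ - 1, max t t₀ + 1, by grind, by grind⟩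
  obtain ⟨K, hK⟩ := isCompact_Icc.exists_bound_of_continuousOn (hB.continuousOn (s := Icc a b))
  refine ODE_solution_unique_of_mem_Ioo (K := K.toNNReal) (s := fun _ => univ) (fun s hs => ?_)
    ht₀ (fun s _ => ⟨hf s, mem_univ _⟩) (fun s _ => ⟨hg s, mem_univ _⟩) h ht
  have hKs := hK s (Ioo_subset_Icc_self hs)
  exact ((B s).lipschitz.weaken
    ((Real.le_toNNReal_iff_coe_le ((norm_nonneg _).trans hKs)).2 hKs)).lipschitzOnWith

end LinearODE

variable {ι : Type*} [Fintype ι]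

theorem Matrix.ODE_solution_unique_of_mulVec [DecidableEq ι] {B : ℝ → Matrix ι ι ℝ}
    (hB : Continuous B) {f g : ℝ → ι → ℝ} (hf : ∀ t, HasDerivAt f (B t *ᵥ f t) t)
    (hg : ∀ t, HasDerivAt g (B t *ᵥ g t) t) {t₀ : ℝ} (h : f t₀ = g t₀) : f = g :=
  let L : Matrix ι ι ℝ →ₗ[ℝ] (ι → ℝ) →L[ℝ] (ι → ℝ) :=
    LinearMap.toContinuousLinearMap.toLinearMap ∘ₗ Matrix.toLin'.toLinearMap
  ODE_solution_unique_of_linear (B := fun t => L (B t))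
    (L.continuous_of_finiteDimensional.comp hB) hf hg h

theorem Matrix.inv_transpose_mulVec_transpose_mulVec [DecidableEq ι] {M : Matrix ι ι ℝ}
    (h : IsUnit M.det) (x : ι → ℝ) : M⁻¹ᵀ *ᵥ (Mᵀ *ᵥ x) = x := by
  rw [mulVec_mulVec, ← transpose_mul, mul_nonsing_inv _ h, transpose_one, one_mulVec]

theorem Matrix.isUnit_one_sub_of_tendsto_pow_mulVec {K : Type*} [Field K] [TopologicalSpace K]
    [T2Space K] [DecidableEq ι] {M : Matrix ι ι K}
    (h : ∀ x, Tendsto (fun m : ℕ => (M ^ m) *ᵥ x) atTop (𝓝 0)) : IsUnit (1 - M) := by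
  refine (isUnit_iff_isUnit_det _).2 (isUnit_iff_ne_zero.2 fun hdet => ?_)
  obtain ⟨x, hx, hfix⟩ := exists_mulVec_eq_zero_iff.2 hdet
  rw [sub_mulVec, one_mulVec, sub_eq_zero] at hfix
  have hpow : ∀ m : ℕ, M ^ m *ᵥ x = x := fun m => by
    induction m with
    | zero => simp
    | succ m ih => rw [pow_succ, ← mulVec_mulVec, ← hfix, ih]
  have hx0 := h x
  simp only [hpow, tendsto_const_nhds_iff] at hx0
  exact hx hx0

section MatrixCalculus

variable {M : ℝ → Matrix ι ι ℝ} {M' : Matrix ι ι ℝ} {t : ℝ}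

theorem hasDerivAt_matrix_iff :
    HasDerivAt M M' t ↔ ∀ i j, HasDerivAt (fun s => M s i j) (M' i j) t :=
  hasDerivAt_pi.trans (forall_congr' fun _ => hasDerivAt_pi)

theorem HasDerivAt.matrix_transpose (hM : HasDerivAt M M' t) :
    HasDerivAt (fun s => (M s)ᵀ) M'ᵀ t :=
  hasDerivAt_matrix_iff.2 fun i j => hasDerivAt_matrix_iff.1 hM j i

theorem HasDerivAt.matrix_mulVec {v : ℝ → ι → ℝ} {v' : ι → ℝ} (hM : HasDerivAt M M' t)
    (hv : HasDerivAt v v' t) :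
    HasDerivAt (fun s => M s *ᵥ v s) (M' *ᵥ v t + M t *ᵥ v') t := by
  refine hasDerivAt_pi.2 fun i => ?_
  simp only [mulVec, dotProduct, Pi.add_apply, ← Finset.sum_add_distrib]
  exact HasDerivAt.fun_sum fun j _ => (hasDerivAt_matrix_iff.1 hM i j).mul (hasDerivAt_pi.1 hv j)

theorem HasDerivAt.matrix_inv [DecidableEq ι] (hM : HasDerivAt M M' t) (hdet : IsUnit (M t).det) :
    HasDerivAt (fun s => (M s)⁻¹) (-((M t)⁻¹ * M' * (M t)⁻¹)) t := by
  have hdet_near : ∀ᶠ s in 𝓝 t, IsUnit (M s).det := by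
    have : ContinuousAt (fun s => (M s).det) t :=
      continuous_id.matrix_det.continuousAt.comp hM.continuousAt
    filter_upwards [this.eventually_ne hdet.ne_zero] with s hs using isUnit_iff_ne_zero.2 hs
  have hinv : ContinuousAt (fun s => (M s)⁻¹) t :=
    (continuousAt_matrix_inv _ (by
      rw [Ring.inverse_eq_inv']; exact continuousAt_inv₀ hdet.ne_zero)).comp hM.continuousAt
  replace hM := hasDerivAt_iff_tendsto_slope.1 hM
  refine hasDerivAt_iff_tendsto_slope.2 ?_
  have hslope : ∀ᶠ s in 𝓝[≠] t,
      -((M s)⁻¹ * slope M t s * (M t)⁻¹) = slope (fun s => (M s)⁻¹) t s := by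
    filter_upwards [nhdsWithin_le_nhds hdet_near] with s hs
    rw [slope_def_module, slope_def_module, Matrix.mul_smul, Matrix.smul_mul, ← smul_neg,
      Matrix.mul_sub, Matrix.sub_mul, nonsing_inv_mul _ hs, mul_nonsing_inv_cancel_right _ _ hdet,
      Matrix.one_mul, neg_sub]
  exact (((hinv.tendsto.mono_left nhdsWithin_le_nhds).mul hM).mul_const _).neg.congr' hslope

end MatrixCalculus

variable [DecidableEq ι]

structure IsFundamentalMatrix (A Φ : ℝ → Matrix ι ι ℝ) : Prop where
  hasDerivAt : ∀ t, HasDerivAt Φ (A t * Φ t) t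
  map_zero : Φ 0 = 1

namespace IsFundamentalMatrix

variable {A Φ : ℝ → Matrix ι ι ℝ} {τ : ℝ}

theorem continuous (hF : IsFundamentalMatrix A Φ) : Continuous Φ :=
  continuous_iff_continuousAt.2 fun t => (hF.hasDerivAt t).continuousAt

theorem hasDerivAt_mulVec (hF : IsFundamentalMatrix A Φ) (x : ι → ℝ) (t : ℝ) :
    HasDerivAt (fun s => Φ s *ᵥ x) (A t *ᵥ (Φ t *ᵥ x)) t := by
  simpa [mulVec_mulVec] using (hF.hasDerivAt t).matrix_mulVec (hasDerivAt_const t x)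

theorem isUnit_det (hF : IsFundamentalMatrix A Φ) (hA : Continuous A) (t : ℝ) :
    IsUnit (Φ t).det := by
  refine isUnit_iff_ne_zero.2 fun hdet => ?_
  obtain ⟨x, hx, hΦx⟩ := exists_mulVec_eq_zero_iff.2 hdet
  have hzero := ODE_solution_unique_of_mulVec hA (hF.hasDerivAt_mulVec x) (g := fun _ => 0)
    (fun s => by simpa using hasDerivAt_const s (0 : ι → ℝ)) hΦx
  exact hx (by simpa [hF.map_zero] using congr_fun hzero 0)

theorem add_period (hF : IsFundamentalMatrix A Φ) (hA : Continuous A)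
    (hper : ∀ t, A (t + τ) = A t) (t : ℝ) : Φ (t + τ) = Φ t * Φ τ := by
  have hshift (x : ι → ℝ) : (fun s => Φ (s + τ) *ᵥ x) = fun s => Φ s *ᵥ (Φ τ *ᵥ x) := by
    refine ODE_solution_unique_of_mulVec hA (fun s => ?_) (hF.hasDerivAt_mulVec _) (t₀ := 0)
      (by simp [hF.map_zero])
    simpa [hper] using (hF.hasDerivAt_mulVec x (s + τ)).comp_add_const s τ
  exact toLin'.injective (LinearMap.ext fun x => by
    simpa [mulVec_mulVec] using congr_fun (hshift x) t)

theorem natCast_mul_period (hF : IsFundamentalMatrix A Φ) (hA : Continuous A)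
    (hper : ∀ t, A (t + τ) = A t) (m : ℕ) : Φ (m * τ) = Φ τ ^ m := by
  induction m with
  | zero => simp [hF.map_zero]
  | succ m ih => rw [Nat.cast_succ, add_one_mul, hF.add_period hA hper, ih, pow_succ]

theorem isUnit_one_sub_of_exp_decay (hF : IsFundamentalMatrix A Φ) (hA : Continuous A)
    (hper : ∀ t, A (t + τ) = A t) (hτ : 0 < τ) {K lam : ℝ} (hlam : 0 < lam)
    (hstab : ∀ t, 0 ≤ t → ∀ x, ‖Φ t *ᵥ x‖ ≤ K * Real.exp (-lam * t) * ‖x‖) :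
    IsUnit (1 - Φ τ) := by
  refine isUnit_one_sub_of_tendsto_pow_mulVec fun x => squeeze_zero_norm (fun m => ?_)
    (a := fun m : ℕ => K * Real.exp (-lam * (m * τ)) * ‖x‖) ?_
  · rw [← hF.natCast_mul_period hA hper]
    exact hstab _ (by positivity) x
  · have hexp : Tendsto (fun m : ℕ => Real.exp (-lam * (m * τ))) atTop (𝓝 0) :=
      Real.tendsto_exp_atBot.comp <| tendsto_id.const_mul_atTop_of_neg (neg_neg_of_pos hlam)
        |>.comp (tendsto_natCast_atTop_atTop.atTop_mul_const hτ)
    simpa using (hexp.const_mul K).mul_const ‖x‖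

theorem hasDerivAt_transpose_mulVec_of_adjoint (hF : IsFundamentalMatrix A Φ) {η : ℝ → ι → ℝ}
    {q : ι → ℝ} {t : ℝ} (hη : HasDerivAt η (-((A t)ᵀ *ᵥ η t + q)) t) :
    HasDerivAt (fun s => (Φ s)ᵀ *ᵥ η s) (-((Φ t)ᵀ *ᵥ q)) t := by
  convert (hF.hasDerivAt t).matrix_transpose.matrix_mulVec hη using 1
  rw [transpose_mul, ← mulVec_mulVec, mulVec_neg, mulVec_add]
  abel

theorem hasDerivAt_inv_transpose_mulVec (hF : IsFundamentalMatrix A Φ) {t : ℝ}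
    (hdet : IsUnit (Φ t).det) {u : ℝ → ι → ℝ} {q : ι → ℝ}
    (hu : HasDerivAt u (-((Φ t)ᵀ *ᵥ q)) t) :
    HasDerivAt (fun s => (Φ s)⁻¹ᵀ *ᵥ u s) (-((A t)ᵀ *ᵥ ((Φ t)⁻¹ᵀ *ᵥ u t) + q)) t := by
  convert ((hF.hasDerivAt t).matrix_inv hdet).matrix_transpose.matrix_mulVec hu using 1
  rw [← Matrix.mul_assoc, mul_nonsing_inv_cancel_right _ _ hdet, transpose_neg, transpose_mul,
    neg_mulVec, ← mulVec_mulVec, mulVec_neg, inv_transpose_mulVec_transpose_mulVec hdet, neg_add]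

theorem exists_periodic_adjoint (hF : IsFundamentalMatrix A Φ) (hA : Continuous A)
    (hmono : IsUnit (1 - Φ τ)) {q : ℝ → ι → ℝ} (hq : Continuous q) :
    ∃ η : ℝ → ι → ℝ, (∀ t, HasDerivAt η (-((A t)ᵀ *ᵥ η t + q t)) t) ∧ η 0 = η τ := by
  set w : ℝ → ι → ℝ := fun t => ∫ s in (0 : ℝ)..t, (Φ s)ᵀ *ᵥ q s
  have hw (t : ℝ) : HasDerivAt w ((Φ t)ᵀ *ᵥ q t) t :=
    (hF.continuous.matrix_transpose.matrix_mulVec hq).integral_hasStrictDerivAt 0 t |>.hasDerivAt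
  have hdet : IsUnit (1 - Φ τ)ᵀ.det := by rwa [det_transpose, ← isUnit_iff_isUnit_det]
  set c := (1 - Φ τ)ᵀ⁻¹ *ᵥ w τ
  have hc : c - w τ = (Φ τ)ᵀ *ᵥ c := by
    have hsolve : (1 - Φ τ)ᵀ *ᵥ c = w τ := by
      rw [mulVec_mulVec, mul_nonsing_inv _ hdet, one_mulVec]
    rw [← hsolve, transpose_sub, transpose_one, sub_mulVec, one_mulVec, sub_sub_cancel]
  refine ⟨fun t => (Φ t)⁻¹ᵀ *ᵥ (c - w t),
    fun t => hF.hasDerivAt_inv_transpose_mulVec (hF.isUnit_det hA t) ((hw t).const_sub c), ?_⟩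
  simp only [hF.map_zero, inv_one, transpose_one, one_mulVec, w, intervalIntegral.integral_same,
    sub_zero]
  rw [hc, inv_transpose_mulVec_transpose_mulVec (hF.isUnit_det hA τ)]

theorem eqOn_of_periodic_adjoint (hF : IsFundamentalMatrix A Φ) (hA : Continuous A)
    (hmono : IsUnit (1 - Φ τ)) (hτ : 0 ≤ τ) {q : ℝ → ι → ℝ} {η₁ η₂ : ℝ → ι → ℝ}
    (h₁ : ∀ t ∈ Icc 0 τ, HasDerivAt η₁ (-((A t)ᵀ *ᵥ η₁ t + q t)) t)
    (h₂ : ∀ t ∈ Icc 0 τ, HasDerivAt η₂ (-((A t)ᵀ *ᵥ η₂ t + q t)) t)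
    (hp₁ : η₁ 0 = η₁ τ) (hp₂ : η₂ 0 = η₂ τ) : EqOn η₁ η₂ (Icc 0 τ) := by
  set d : ℝ → ι → ℝ := fun s => (Φ s)ᵀ *ᵥ (η₁ s - η₂ s)
  have hd : ∀ t ∈ Icc 0 τ, HasDerivAt d 0 t := fun t ht => by
    have hsub := (hF.hasDerivAt_transpose_mulVec_of_adjoint (h₁ t ht)).fun_sub
      (hF.hasDerivAt_transpose_mulVec_of_adjoint (h₂ t ht))
    simpa only [d, mulVec_sub, sub_self] using hsub
  have hconst : ∀ t ∈ Icc 0 τ, d t = d 0 := constant_of_has_deriv_right_zero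
    (HasDerivAt.continuousOn hd) fun t ht => (hd t (Ico_subset_Icc_self ht)).hasDerivWithinAt
  have hd0 : d 0 = 0 := by
    have hfix := hconst τ ⟨hτ, le_rfl⟩
    simp only [d, hF.map_zero, transpose_one, one_mulVec, ← hp₁, ← hp₂] at hfix
    refine mulVec_injective_iff_isUnit.2 ((isUnit_transpose _).2 hmono) ?_
    simp [d, hF.map_zero, transpose_sub, sub_mulVec, hfix]
  intro t ht
  rw [← sub_eq_zero, ← inv_transpose_mulVec_transpose_mulVec (hF.isUnit_det hA t) (η₁ t - η₂ t)]
  change (Φ t)⁻¹ᵀ *ᵥ d t = 0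
  rw [hconst t ht, hd0, mulVec_zero]

end IsFundamentalMatrix

theorem stmt_6_general {n : ℕ} (τ : ℝ) (hτ : 0 < τ)
    (A : ℝ → Matrix (Fin n) (Fin n) ℝ)
    (hAcont : Continuous A)
    (hAper : ∀ t : ℝ, A (t + τ) = A t)
    (Φ : ℝ → Matrix (Fin n) (Fin n) ℝ)
    (hΦ : ∀ (t : ℝ) (i j : Fin n),
      HasDerivAt (fun s => Φ s i j) ((A t * Φ t) i j) t)
    (hΦ0 : Φ 0 = 1)
    (K lam : ℝ) (hlam : 0 < lam)
    (hstab : ∀ s t : ℝ, 0 ≤ s → s ≤ t → ∀ x : Fin n → ℝ,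
      ‖(Φ t * (Φ s)⁻¹).mulVec x‖ ≤ K * Real.exp (-lam * (t - s)) * ‖x‖)
    (q : ℝ → (Fin n → ℝ))
    (hqcont : Continuous q) :
    ∃ η : ℝ → (Fin n → ℝ),
      (∀ t ∈ Set.Icc (0:ℝ) τ,
        HasDerivAt η (-((A t)ᵀ.mulVec (η t) + q t)) t) ∧ η 0 = η τ ∧
      ∀ η' : ℝ → (Fin n → ℝ),
        (∀ t ∈ Set.Icc (0:ℝ) τ,
          HasDerivAt η' (-((A t)ᵀ.mulVec (η' t) + q t)) t) → η' 0 = η' τ →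
        ∀ t ∈ Set.Icc (0:ℝ) τ, η' t = η t := by
  have hF : IsFundamentalMatrix A Φ := ⟨fun t => hasDerivAt_matrix_iff.2 (hΦ t), hΦ0⟩
  have hmono : IsUnit (1 - Φ τ) := hF.isUnit_one_sub_of_exp_decay hAcont hAper hτ hlam
    fun t ht x => by simpa [hΦ0] using hstab 0 t le_rfl ht x
  obtain ⟨η, hη, hper⟩ := hF.exists_periodic_adjoint hAcont hmono hqcont
  exact ⟨η, fun t _ => hη t, hper, fun η' hη' hper' =>
    hF.eqOn_of_periodic_adjoint hAcont hmono hτ.le hη' (fun t _ => hη t) hper' hper⟩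

/-- Unique solvability of the periodic boundary value problem for the adjoint
linear ODE `η' + Aᵀη + q = 0`, `η(0) = η(τ)`, under exponential stability of the
fundamental solution `Φ` of `Φ' = AΦ`. -/
theorem stmt_6 {n : ℕ} (τ : ℝ) (hτ : 0 < τ)
    (A : ℝ → Matrix (Fin n) (Fin n) ℝ)
    (hAcont : Continuous A)
    (hAper : ∀ t : ℝ, A (t + τ) = A t)
    (Φ : ℝ → Matrix (Fin n) (Fin n) ℝ)
    (hΦ : ∀ (t : ℝ) (i j : Fin n),
      HasDerivAt (fun s => Φ s i j) ((A t * Φ t) i j) t)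
    (hΦ0 : Φ 0 = 1)
    (K lam : ℝ) (hK : 0 < K) (hlam : 0 < lam)
    (hstab : ∀ s t : ℝ, 0 ≤ s → s ≤ t → ∀ x : Fin n → ℝ,
      ‖(Φ t * (Φ s)⁻¹).mulVec x‖ ≤ K * Real.exp (-lam * (t - s)) * ‖x‖)
    (q : ℝ → (Fin n → ℝ))
    (hqcont : Continuous q)
    (hqbd : ∃ C : ℝ, ∀ t : ℝ, ‖q t‖ ≤ C)
    (hqper : ∀ t : ℝ, q (t + τ) = q t) :
    ∃ η : ℝ → (Fin n → ℝ),
      (∀ t ∈ Set.Icc (0:ℝ) τ,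
        HasDerivAt η (-((A t)ᵀ.mulVec (η t) + q t)) t) ∧ η 0 = η τ ∧
      ∀ η' : ℝ → (Fin n → ℝ),
        (∀ t ∈ Set.Icc (0:ℝ) τ,
          HasDerivAt η' (-((A t)ᵀ.mulVec (η' t) + q t)) t) → η' 0 = η' τ →
        ∀ t ∈ Set.Icc (0:ℝ) τ, η' t = η t :=
  stmt_6_general τ hτ A hAcont hAper Φ hΦ hΦ0 K lam hlam hstab q hqcont
end

section
/- Let K₁, K₂, K₃, λ > 0 and let L : [0, T] → ℝ be continuous, nonnegative, nonincreasing in T in the sense of a family, satisfying for t ∈ [0, kτ] the bound L(t) ≤ ε e^{-λ(kτ - t)} + K₁K₂ ∫ₜ^{kτ} e^{-λ(s - t)} L(s)² ds with 0 < ε ≤ λ/(2K₁K₂). Then L(t) ≤ (λ/(K₁K₂)) e^{-λ(kτ - t)} for all t ∈ [0, kτ]. -/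
/-!
Put `g(t) = K₁K₂ e^{λ(kτ - t)} L(t)`. The hypothesis becomes
`g(t) ≤ λ/2 + ∫ₜ^{kτ} e^{-λ(kτ - s)} g(s)² ds =: φ(t)`. Since `g ≤ φ`, the function `1/φ` has
derivative `w g²/φ² ≤ w` with `w(s) = e^{-λ(kτ - s)}`, so `1/φ(t) ≥ 2/λ - ∫ₜ^{kτ} w ≥ 1/λ`,
i.e. `g ≤ φ ≤ λ`.
-/

open Set Real intervalIntegral

namespace ContinuousOn

variable {f : ℝ → ℝ} {a b : ℝ}

lemma continuousOn_integral_left (hf : ContinuousOn f (Icc a b)) :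
    ContinuousOn (fun t => ∫ s in t..b, f s) (Icc a b) := by
  rcases le_or_gt a b with hab | hba
  · rw [← uIcc_of_le hab] at hf ⊢
    exact continuousOn_primitive_interval_left (hf.integrableOn_compact isCompact_uIcc)
  · rw [Icc_eq_empty hba.not_ge]
    exact continuousOn_empty _

lemma hasDerivAt_integral_left (hf : ContinuousOn f (Icc a b)) {x : ℝ} (hx : x ∈ Ioo a b) :
    HasDerivAt (fun t => ∫ s in t..b, f s) (-f x) x := by
  have hnhds : Icc a b ∈ nhds x := Icc_mem_nhds hx.1 hx.2
  have hxb : uIcc x b ⊆ Icc a b :=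
    uIcc_subset_Icc (Ioo_subset_Icc_self hx) (right_mem_Icc.2 (hx.1.trans hx.2).le)
  exact integral_hasDerivAt_left (hf.mono hxb).intervalIntegrable
    ⟨Icc a b, hnhds, hf.aestronglyMeasurable measurableSet_Icc⟩ (hf.continuousAt hnhds)

end ContinuousOn

section QuadraticBihari

variable {g w : ℝ → ℝ} {a b c : ℝ}

lemma le_add_integral_mul_sq (hw0 : ∀ t ∈ Icc a b, 0 ≤ w t) {t : ℝ} (ht : t ∈ Icc a b) :
    c ≤ c + ∫ s in t..b, w s * g s ^ 2 :=
  le_add_of_nonneg_right <| integral_nonneg ht.2 fun s hs =>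
    mul_nonneg (hw0 s ⟨ht.1.trans hs.1, hs.2⟩) (sq_nonneg _)

theorem antitoneOn_inv_add_integral_of_le_add_integral_mul_sq (hc : 0 < c)
    (hg : ContinuousOn g (Icc a b)) (hg0 : ∀ t ∈ Icc a b, 0 ≤ g t)
    (hw : ContinuousOn w (Icc a b)) (hw0 : ∀ t ∈ Icc a b, 0 ≤ w t)
    (hle : ∀ t ∈ Icc a b, g t ≤ c + ∫ s in t..b, w s * g s ^ 2) :
    AntitoneOn (fun t => (c + ∫ s in t..b, w s * g s ^ 2)⁻¹ + ∫ s in t..b, w s) (Icc a b) := by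
  set φ : ℝ → ℝ := fun t => c + ∫ s in t..b, w s * g s ^ 2
  have hwg : ContinuousOn (fun s => w s * g s ^ 2) (Icc a b) := hw.mul (hg.pow 2)
  have hφ_pos : ∀ t ∈ Icc a b, 0 < φ t := fun t ht =>
    hc.trans_le (le_add_integral_mul_sq hw0 ht)
  refine antitoneOn_of_hasDerivWithinAt_nonpos (convex_Icc a b)
    (((continuousOn_const.add hwg.continuousOn_integral_left).inv₀
      fun t ht => (hφ_pos t ht).ne').add hw.continuousOn_integral_left)
    (f' := fun x => -(-(w x * g x ^ 2)) / φ x ^ 2 + -w x) ?_ ?_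
  · intro x hx
    rw [interior_Icc] at hx
    exact ((((hwg.hasDerivAt_integral_left hx).const_add c).inv
      (hφ_pos x (Ioo_subset_Icc_self hx)).ne').add
      (hw.hasDerivAt_integral_left hx)).hasDerivWithinAt
  · intro x hx
    rw [interior_Icc] at hx
    have hx' := Ioo_subset_Icc_self hx
    have hsq : g x ^ 2 ≤ φ x ^ 2 := pow_le_pow_left₀ (hg0 x hx') (hle x hx') 2
    rw [neg_neg, mul_div_assoc, ← sub_eq_add_neg, sub_nonpos]
    exact mul_le_of_le_one_right (hw0 x hx') ((div_le_one (pow_pos (hφ_pos x hx') 2)).2 hsq)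

theorem le_div_one_sub_mul_integral_of_le_add_integral_mul_sq (hc : 0 < c)
    (hg : ContinuousOn g (Icc a b)) (hg0 : ∀ t ∈ Icc a b, 0 ≤ g t)
    (hw : ContinuousOn w (Icc a b)) (hw0 : ∀ t ∈ Icc a b, 0 ≤ w t)
    (hsmall : c * ∫ s in a..b, w s < 1)
    (hle : ∀ t ∈ Icc a b, g t ≤ c + ∫ s in t..b, w s * g s ^ 2) :
    ∀ t ∈ Icc a b, g t ≤ c / (1 - c * ∫ s in t..b, w s) := by
  intro t ht
  set φ := c + ∫ s in t..b, w s * g s ^ 2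
  have hφ : 0 < φ := hc.trans_le (le_add_integral_mul_sq hw0 ht)
  have key : c⁻¹ ≤ φ⁻¹ + ∫ s in t..b, w s := by
    simpa using antitoneOn_inv_add_integral_of_le_add_integral_mul_sq hc hg hg0 hw hw0 hle
      ht ⟨ht.1.trans ht.2, le_rfl⟩ ht.2
  have hab : uIcc a b ⊆ Icc a b := uIcc_subset_Icc (left_mem_Icc.2 (ht.1.trans ht.2))
    (right_mem_Icc.2 (ht.1.trans ht.2))
  have hsmall_t : c * ∫ s in t..b, w s < 1 := by
    refine (mul_le_mul_of_nonneg_left ?_ hc.le).trans_lt hsmall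
    exact integral_mono_interval ht.1 ht.2 le_rfl
      ((MeasureTheory.ae_restrict_iff' measurableSet_Ioc).2 (Filter.Eventually.of_forall
        fun s hs => hw0 s (Ioc_subset_Icc_self hs))) (hw.mono hab).intervalIntegrable
  calc g t ≤ φ := hle t ht
    _ ≤ c / (1 - c * ∫ s in t..b, w s) := by
      rw [le_div_iff₀ (by linarith)]
      have := mul_le_mul_of_nonneg_left key (mul_pos hc hφ).le
      field_simp at this
      linarith

end QuadraticBihari

lemma integral_exp_neg_mul_sub {lam : ℝ} (hlam : lam ≠ 0) (t b : ℝ) :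
    ∫ s in t..b, exp (-lam * (b - s)) = (1 - exp (-lam * (b - t))) / lam := by
  have hderiv : ∀ s ∈ uIcc t b,
      HasDerivAt (fun s => exp (-lam * (b - s)) / lam) (exp (-lam * (b - s))) s := by
    intro s _
    refine ((((hasDerivAt_id s).const_sub b).const_mul (-lam)).exp.div_const lam).congr_deriv ?_
    simp [hlam]
  rw [integral_eq_sub_of_hasDerivAt hderiv ((by fun_prop : Continuous _).intervalIntegrable _ _)]
  simp only [sub_self, mul_zero, exp_zero]
  ring

theorem le_of_le_half_add_integral_exp_mul_sq {g : ℝ → ℝ} {lam a b : ℝ} (hlam : 0 < lam)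
    (hg : ContinuousOn g (Icc a b)) (hg0 : ∀ t ∈ Icc a b, 0 ≤ g t)
    (hle : ∀ t ∈ Icc a b, g t ≤ lam / 2 + ∫ s in t..b, exp (-lam * (b - s)) * g s ^ 2) :
    ∀ t ∈ Icc a b, g t ≤ lam := by
  have hbound := le_div_one_sub_mul_integral_of_le_add_integral_mul_sq (half_pos hlam) hg hg0
    (by fun_prop) (fun s _ => (exp_pos _).le) (by
      rw [integral_exp_neg_mul_sub hlam.ne', div_mul_div_comm, div_lt_one (by positivity)]
      nlinarith [exp_pos (-lam * (b - a))]) hle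
  intro t ht
  have he := exp_pos (-lam * (b - t))
  have hden : 1 - lam / 2 * ((1 - exp (-lam * (b - t))) / lam) = (1 + exp (-lam * (b - t))) / 2 := by
    field_simp; ring
  have hgt := hbound t ht
  rw [integral_exp_neg_mul_sub hlam.ne', hden, div_div_div_cancel_right₀ two_ne_zero] at hgt
  exact hgt.trans (div_le_self hlam.le (by linarith))

lemma mul_exp_mul_le_of_le_exp_add_integral {L : ℝ → ℝ} {C lam ε b t : ℝ} (hC : 0 ≤ C)
    (h : L t ≤ ε * exp (-lam * (b - t)) + C * ∫ s in t..b, exp (-lam * (s - t)) * L s ^ 2) :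
    C * exp (lam * (b - t)) * L t ≤
      C * ε + ∫ s in t..b, exp (-lam * (b - s)) * (C * exp (lam * (b - s)) * L s) ^ 2 := by
  have hinv : exp (lam * (b - t)) * exp (-lam * (b - t)) = 1 := by
    rw [← exp_add, neg_mul, add_neg_cancel, exp_zero]
  have hrescale : C * exp (lam * (b - t)) * (C * ∫ s in t..b, exp (-lam * (s - t)) * L s ^ 2)
      = ∫ s in t..b, exp (-lam * (b - s)) * (C * exp (lam * (b - s)) * L s) ^ 2 := by
    rw [← integral_const_mul, ← integral_const_mul]
    congr 1
    funext s
    have e₁ : exp (lam * (b - t)) * exp (-lam * (s - t)) = exp (lam * (b - s)) := by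
      rw [← exp_add]; ring_nf
    have e₂ : exp (-lam * (b - s)) * exp (lam * (b - s)) ^ 2 = exp (lam * (b - s)) := by
      rw [sq, ← exp_add, ← exp_add]; ring_nf
    linear_combination (C ^ 2 * L s ^ 2) * e₁ - (C ^ 2 * L s ^ 2) * e₂
  calc C * exp (lam * (b - t)) * L t
      ≤ C * exp (lam * (b - t)) * (ε * exp (-lam * (b - t)) +
          C * ∫ s in t..b, exp (-lam * (s - t)) * L s ^ 2) := by gcongr
    _ = C * ε * (exp (lam * (b - t)) * exp (-lam * (b - t))) +
          C * exp (lam * (b - t)) * (C * ∫ s in t..b, exp (-lam * (s - t)) * L s ^ 2) := by ring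
    _ = _ := by rw [hinv, hrescale, mul_one]

theorem stmt_7_general (K₁ K₂ lam τ ε : ℝ) (hK₁ : 0 < K₁) (hK₂ : 0 < K₂)
    (hlam : 0 < lam) (k : ℕ)
    (L : ℝ → ℝ)
    (hL : ContinuousOn L (Set.Icc 0 ((k : ℝ) * τ)))
    (hnn : ∀ t ∈ Set.Icc (0:ℝ) ((k : ℝ) * τ), 0 ≤ L t)
    (hε2 : ε ≤ lam / (2 * K₁ * K₂))
    (hineq : ∀ t ∈ Set.Icc (0:ℝ) ((k : ℝ) * τ),
      L t ≤ ε * Real.exp (-lam * ((k : ℝ) * τ - t)) +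
        K₁ * K₂ * ∫ s in t..((k : ℝ) * τ), Real.exp (-lam * (s - t)) * (L s) ^ 2) :
    ∀ t ∈ Set.Icc (0:ℝ) ((k : ℝ) * τ),
      L t ≤ (lam / (K₁ * K₂)) * Real.exp (-lam * ((k : ℝ) * τ - t)) := by
  set T : ℝ := (k : ℝ) * τ
  set C : ℝ := K₁ * K₂
  have hC : 0 < C := mul_pos hK₁ hK₂
  have hCε : C * ε ≤ lam / 2 := by
    calc C * ε ≤ C * (lam / (2 * K₁ * K₂)) := by gcongr
      _ = lam / 2 := by simp only [C]; field_simp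
  have hg_le := le_of_le_half_add_integral_exp_mul_sq (g := fun t => C * exp (lam * (T - t)) * L t)
    hlam (by fun_prop) (fun t ht => by have := hnn t ht; positivity)
    (fun t ht => (mul_exp_mul_le_of_le_exp_add_integral hC.le (hineq t ht)).trans (by gcongr))
  intro t ht
  rw [neg_mul, exp_neg, ← div_eq_mul_inv, div_div, le_div_iff₀ (by positivity)]
  linarith [hg_le t ht]

/-- Exponential decay from a nonlinear integral inequality with small parameter `ε`. -/
theorem stmt_7 (K₁ K₂ K₃ lam τ ε : ℝ) (hK₁ : 0 < K₁) (hK₂ : 0 < K₂) (hK₃ : 0 < K₃)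
    (hlam : 0 < lam) (hτ : 0 < τ) (k : ℕ) (hk : 0 < k)
    (L : ℝ → ℝ)
    (hL : ContinuousOn L (Set.Icc 0 ((k : ℝ) * τ)))
    (hnn : ∀ t ∈ Set.Icc (0:ℝ) ((k : ℝ) * τ), 0 ≤ L t)
    (hε : 0 < ε) (hε2 : ε ≤ lam / (2 * K₁ * K₂))
    (hineq : ∀ t ∈ Set.Icc (0:ℝ) ((k : ℝ) * τ),
      L t ≤ ε * Real.exp (-lam * ((k : ℝ) * τ - t)) +
        K₁ * K₂ * ∫ s in t..((k : ℝ) * τ), Real.exp (-lam * (s - t)) * (L s) ^ 2) :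
    ∀ t ∈ Set.Icc (0:ℝ) ((k : ℝ) * τ),
      L t ≤ (lam / (K₁ * K₂)) * Real.exp (-lam * ((k : ℝ) * τ - t)) :=
  stmt_7_general K₁ K₂ lam τ ε hK₁ hK₂ hlam k L hL hnn hε2 hineq
end

section
/- Suppose G : [0, T] → ℝ is differentiable, nonnegative, and satisfies G'(t) ≤ (−δβ + αK e^{−λ(T−t)}) G(t) + K(e^{−λ t} + e^{−λ(T−t)}) for all t ∈ [0, T], where α, β, δ, K, λ > 0 are constants independent of T with δβ ≠ λ. Then there exist constants K', λ' > 0 independent of T such that G(t) ≤ K'(G(0) e^{−λ' t} + e^{−λ' t} + e^{−λ'(T−t)}) for all t ∈ [0, T]. -/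
/-!
With `a = δβ` and `c = αK`, multiply `G` by the integrating factor
`exp (a s - (c / λ) e^{-λ(T-s)})`. Uniformly in `T` it lies between `e^{as - c/λ}` and `e^{as}`,
so the derivative of the product is at most `K (e^{(a-λ)s} + e^{-λT} e^{(a+λ)s})`.
Integrating over `[0, t]` and dividing by the factor, the forcing contributes
`K (e^{-λt} - e^{-at}) / (a - λ) ≤ K e^{-min(a,λ) t} / |a - λ|` and at most
`K e^{-λ(T-t)} / (a + λ)`, which gives the claim with `λ' = min(a, λ)`.
-/

open Real Set

theorem mul_exp_neg_sub_le_of_deriv_le {G P Q p q r : ℝ → ℝ} {a b : ℝ}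
    (hG : ∀ t ∈ Icc a b, DifferentiableAt ℝ G t)
    (hP : ∀ t ∈ Icc a b, HasDerivAt P (p t) t)
    (hQ : ∀ t ∈ Icc a b, HasDerivAt Q (r t) t)
    (hGp : ∀ t ∈ Ioo a b, deriv G t ≤ p t * G t + q t)
    (hqr : ∀ t ∈ Ioo a b, q t * exp (-P t) ≤ r t) :
    ∀ t ∈ Icc a b, G t * exp (-P t) - Q t ≤ G a * exp (-P a) - Q a := by
  have hF : ∀ t ∈ Icc a b, HasDerivAt (fun s => G s * exp (-P s) - Q s)
      (deriv G t * exp (-P t) + G t * (exp (-P t) * -p t) - r t) t := fun t ht =>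
    ((hG t ht).hasDerivAt.mul (hP t ht).neg.exp).sub (hQ t ht)
  have hanti : AntitoneOn (fun s => G s * exp (-P s) - Q s) (Icc a b) := by
    refine antitoneOn_of_deriv_nonpos (convex_Icc a b)
      (fun t ht => (hF t ht).continuousAt.continuousWithinAt) ?_ ?_ <;> rw [interior_Icc]
    · exact fun t ht => (hF t (Ioo_subset_Icc_self ht)).differentiableAt.differentiableWithinAt
    · intro t ht
      rw [(hF t (Ioo_subset_Icc_self ht)).deriv]
      have := mul_le_mul_of_nonneg_right (hGp t ht) (exp_pos (-P t)).le
      linarith [hqr t ht]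
  intro t ht
  exact hanti ⟨le_rfl, ht.1.trans ht.2⟩ ht ht.1

theorem le_exp_mul_of_mul_exp_neg_le {g P R X : ℝ} (hg : 0 ≤ g) (hgX : g * exp (-P) ≤ X)
    (hPR : P ≤ R) : g ≤ exp R * X := calc
  g = exp P * (g * exp (-P)) := by rw [mul_left_comm, ← exp_add, add_neg_cancel, exp_zero, mul_one]
  _ ≤ exp P * X := by gcongr
  _ ≤ exp R * X := by gcongr; exact (mul_nonneg hg (exp_pos _).le).trans hgX

theorem sub_exp_div_le_exp_min_div_abs {a lam t : ℝ} (ht : 0 ≤ t) :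
    (exp (-lam * t) - exp (-a * t)) / (a - lam) ≤ exp (-min a lam * t) / |a - lam| := by
  have hlam : exp (-lam * t) ≤ exp (-min a lam * t) := by
    gcongr; exact min_le_right a lam
  have ha : exp (-a * t) ≤ exp (-min a lam * t) := by
    gcongr; exact min_le_left a lam
  calc (exp (-lam * t) - exp (-a * t)) / (a - lam)
      ≤ |(exp (-lam * t) - exp (-a * t)) / (a - lam)| := le_abs_self _
    _ = |exp (-lam * t) - exp (-a * t)| / |a - lam| := abs_div _ _
    _ ≤ exp (-min a lam * t) / |a - lam| := by
      gcongr
      rw [abs_sub_le_iff]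
      constructor <;> linarith [exp_pos (-a * t), exp_pos (-lam * t)]

noncomputable def turnpikeExponent (a c lam T s : ℝ) : ℝ := -a * s + c / lam * exp (-lam * (T - s))

/-- A primitive of `K (e^{-λs} + e^{-λ(T-s)}) e^{as}` when `a ≠ ±λ`. -/
noncomputable def forcingPrimitive (a K lam T s : ℝ) : ℝ :=
  K * (exp ((a - lam) * s) / (a - lam) + exp (-lam * T) * exp ((a + lam) * s) / (a + lam))

section

variable {a c K lam T s : ℝ}

theorem hasDerivAt_turnpikeExponent (hlam : lam ≠ 0) :
    HasDerivAt (turnpikeExponent a c lam T) (-a + c * exp (-lam * (T - s))) s := by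
  have hin : HasDerivAt (fun s => -lam * (T - s)) lam s := by
    simpa using ((hasDerivAt_id s).const_sub T).const_mul (-lam)
  refine (((hasDerivAt_id' s).const_mul (-a)).add (hin.exp.const_mul (c / lam))).congr_deriv ?_
  field_simp

theorem hasDerivAt_forcingPrimitive (h₁ : a - lam ≠ 0) (h₂ : a + lam ≠ 0) :
    HasDerivAt (forcingPrimitive a K lam T)
      (K * (exp (-lam * s) + exp (-lam * (T - s))) * exp (a * s)) s := by
  have hexp : ∀ b, HasDerivAt (fun s => exp (b * s)) (exp (b * s) * b) s := fun b => by
    simpa using ((hasDerivAt_id s).const_mul b).exp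
  refine ((((hexp (a - lam)).div_const (a - lam)).add
    (((hexp (a + lam)).const_mul (exp (-lam * T))).div_const (a + lam))).const_mul K).congr_deriv ?_
  field_simp
  ring_nf
  simp only [mul_assoc, ← exp_add]
  ring_nf

theorem turnpikeExponent_le (hc : 0 ≤ c) (hlam : 0 < lam) (hsT : s ≤ T) :
    turnpikeExponent a c lam T s ≤ c / lam - a * s := by
  have : exp (-lam * (T - s)) ≤ 1 := exp_le_one_iff.mpr (by nlinarith)
  have : c / lam * exp (-lam * (T - s)) ≤ c / lam := mul_le_of_le_one_right (by positivity) this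
  unfold turnpikeExponent
  linarith

theorem exp_neg_turnpikeExponent_le (hc : 0 ≤ c) (hlam : 0 ≤ lam) :
    exp (-turnpikeExponent a c lam T s) ≤ exp (a * s) := by
  unfold turnpikeExponent
  gcongr
  nlinarith [exp_pos (-lam * (T - s)), div_nonneg hc hlam]

theorem exp_neg_mul_forcingPrimitive_sub (t : ℝ) :
    exp (-a * t) * (forcingPrimitive a K lam T t - forcingPrimitive a K lam T 0) =
      K * ((exp (-lam * t) - exp (-a * t)) / (a - lam) +
        (exp (-lam * (T - t)) - exp (-lam * T) * exp (-a * t)) / (a + lam)) := by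
  unfold forcingPrimitive
  simp only [mul_zero, exp_zero]
  have e₁ : exp ((a - lam) * t) = exp (a * t) * exp (-lam * t) := by rw [← exp_add]; ring_nf
  have e₂ : exp ((a + lam) * t) = exp (a * t) * exp (lam * t) := by rw [← exp_add]; ring_nf
  have e₃ : exp (-lam * (T - t)) = exp (-lam * T) * exp (lam * t) := by rw [← exp_add]; ring_nf
  have e₄ : exp (-a * t) = (exp (a * t))⁻¹ := by rw [← exp_neg]; ring_nf
  rw [e₁, e₂, e₃, e₄]
  field_simp
  ring

theorem exp_neg_mul_forcingPrimitive_sub_le (hK : 0 ≤ K) (hal : 0 < a + lam) (ht : 0 ≤ t)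
    (htT : t ≤ T) :
    exp (-a * t) * (forcingPrimitive a K lam T t - forcingPrimitive a K lam T 0) ≤
      K * (exp (-min a lam * t) / |a - lam| + exp (-min a lam * (T - t)) / (a + lam)) := by
  rw [exp_neg_mul_forcingPrimitive_sub]
  refine mul_le_mul_of_nonneg_left (add_le_add (sub_exp_div_le_exp_min_div_abs ht) ?_) hK
  gcongr
  calc exp (-lam * (T - t)) - exp (-lam * T) * exp (-a * t) ≤ exp (-lam * (T - t)) :=
          sub_le_self _ (by positivity)
      _ ≤ exp (-min a lam * (T - t)) := by
          gcongr
          exact min_le_right a lam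

end

theorem le_of_deriv_le_turnpike {a c K lam T t : ℝ} {G : ℝ → ℝ} (hc : 0 ≤ c) (hK : 0 ≤ K)
    (hlam : 0 < lam) (h₁ : a - lam ≠ 0) (h₂ : a + lam ≠ 0)
    (hGd : ∀ s ∈ Icc 0 T, DifferentiableAt ℝ G s) (hG : ∀ s ∈ Icc 0 T, 0 ≤ G s)
    (hGineq : ∀ s ∈ Icc 0 T, deriv G s ≤
      (-a + c * exp (-lam * (T - s))) * G s + K * (exp (-lam * s) + exp (-lam * (T - s))))
    (ht : t ∈ Icc 0 T) :
    G t ≤ exp (c / lam) * (G 0 * exp (-a * t) +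
      exp (-a * t) * (forcingPrimitive a K lam T t - forcingPrimitive a K lam T 0)) := by
  set P := turnpikeExponent a c lam T
  set Q := forcingPrimitive a K lam T
  have hcmp := mul_exp_neg_sub_le_of_deriv_le (P := P) (Q := Q)
    (q := fun s => K * (exp (-lam * s) + exp (-lam * (T - s)))) hGd
    (fun s _ => hasDerivAt_turnpikeExponent hlam.ne') (fun s _ => hasDerivAt_forcingPrimitive h₁ h₂)
    (fun s hs => hGineq s (Ioo_subset_Icc_self hs))
    (fun s _ => mul_le_mul_of_nonneg_left (exp_neg_turnpikeExponent_le hc hlam.le) (by positivity))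
    t ht
  have hP₀ : exp (-P 0) ≤ 1 := by simpa using exp_neg_turnpikeExponent_le (s := 0) hc hlam.le
  have hG₀ : 0 ≤ G 0 := hG 0 ⟨le_rfl, ht.1.trans ht.2⟩
  calc G t ≤ exp (c / lam - a * t) * (G 0 * exp (-P 0) + (Q t - Q 0)) :=
        le_exp_mul_of_mul_exp_neg_le (hG t ht) (by linarith) (turnpikeExponent_le hc hlam ht.2)
    _ = exp (c / lam) * (G 0 * exp (-P 0) * exp (-a * t) + exp (-a * t) * (Q t - Q 0)) := by
      rw [sub_eq_add_neg, exp_add, neg_mul]; ring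
    _ ≤ exp (c / lam) * (G 0 * exp (-a * t) + exp (-a * t) * (Q t - Q 0)) := by
      gcongr
      exact mul_le_of_le_one_right hG₀ hP₀

/-- Gronwall step for the turnpike estimate: a differential inequality with an
exponentially localized perturbation of the decay rate and two-sided exponential
forcing yields a two-sided exponential bound, uniformly in the horizon `T`. -/
theorem stmt_13 (α β δ K lam : ℝ) (hα : 0 < α) (hβ : 0 < β) (hδ : 0 < δ)
    (hK : 0 < K) (hlam : 0 < lam) (hne : δ * β ≠ lam) :
    ∃ K' > (0:ℝ), ∃ lam' > (0:ℝ), ∀ T : ℝ, 0 < T → ∀ G : ℝ → ℝ,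
      (∀ t ∈ Set.Icc (0:ℝ) T, DifferentiableAt ℝ G t) →
      (∀ t ∈ Set.Icc (0:ℝ) T, 0 ≤ G t) →
      (∀ t ∈ Set.Icc (0:ℝ) T,
        deriv G t ≤ (-(δ * β) + α * K * Real.exp (-lam * (T - t))) * G t +
          K * (Real.exp (-lam * t) + Real.exp (-lam * (T - t)))) →
      ∀ t ∈ Set.Icc (0:ℝ) T,
        G t ≤ K' * (G 0 * Real.exp (-lam' * t) + Real.exp (-lam' * t) +
          Real.exp (-lam' * (T - t))) := by
  set a := δ * β
  have ha : 0 < a := mul_pos hδ hβ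
  refine ⟨exp (α * K / lam) * (1 + K / |a - lam| + K / (a + lam)), by positivity,
    min a lam, lt_min ha hlam, fun T hT G hGd hG hGineq t ht => ?_⟩
  have hG₀ : 0 ≤ G 0 := hG 0 ⟨le_rfl, hT.le⟩
  have hdecay : exp (-a * t) ≤ exp (-min a lam * t) := by
    gcongr
    · exact ht.1
    · exact min_le_left a lam
  have hu : 0 ≤ K / |a - lam| := by positivity
  have hv : 0 ≤ K / (a + lam) := by positivity
  have he₁ := exp_pos (-min a lam * t)
  have he₂ := exp_pos (-min a lam * (T - t))
  calc G t ≤ _ := le_of_deriv_le_turnpike (by positivity) hK.le hlam (sub_ne_zero.mpr hne)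
        (by positivity) hGd hG hGineq ht
    _ ≤ exp (α * K / lam) * (G 0 * exp (-min a lam * t) +
        (K / |a - lam| * exp (-min a lam * t) + K / (a + lam) * exp (-min a lam * (T - t)))) := by
      gcongr
      exact (exp_neg_mul_forcingPrimitive_sub_le hK.le (by positivity) ht.1 ht.2).trans_eq (by ring)
    _ ≤ _ := by
      rw [mul_assoc]
      gcongr
      nlinarith [mul_nonneg hu (mul_nonneg hG₀ he₁.le), mul_nonneg hv (mul_nonneg hG₀ he₁.le),
        mul_nonneg hu he₂.le, mul_nonneg hv he₁.le]
end

section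
/- Let A : [0, ∞) → Matrix (Fin n) (Fin n) ℝ be bounded measurable and τ-periodic, and let Φ be the fundamental solution of Φ' = AΦ, Φ(0) = I. Suppose there exists a continuous, τ-periodic, uniformly positive definite symmetric matrix function P with bounds αI ≤ P(t) ≤ βI (α, β > 0) satisfying the Lyapunov equation P'(t) + P(t)A(t) + A(t)ᵀP(t) + I = 0 for a.e. t. Then there exist constants K, λ > 0 such that |Φ(t)Φ(s)⁻¹| ≤ K e^{−λ(t−s)} for all 0 ≤ s ≤ t < ∞. -/
/-!
Along a solution `y = Φ(·) v` the quadratic form `V = ⟨y, P y⟩` satisfies `V' = -|y|²` almost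
everywhere by the Lyapunov equation; as `V` is differentiable everywhere and `-|y|²` is continuous,
this holds everywhere. Since `P ≤ β I` gives `V' ≤ -V / β`, the function `e^{t/β} V(t)` is
nonincreasing, and `α I ≤ P` turns this into exponential decay of `|y|`. If `Φ(s)` is singular,
`(Φ s)⁻¹ = 0` and the bound is trivial.
-/

open Matrix MeasureTheory

theorem hasDerivAt_of_ae_eq_continuous {E : Type*} [NormedAddCommGroup E] [NormedSpace ℝ E]
    [CompleteSpace E] {f f' g : ℝ → E} (hf : ∀ x, HasDerivAt f (f' x) x)
    (hfg : f' =ᵐ[volume] g) (hg : Continuous g) (x : ℝ) : HasDerivAt f (g x) x := by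
  have hf_eq : f = fun y => f 0 + ∫ u in (0 : ℝ)..y, g u := by
    funext y
    have hint : IntervalIntegrable f' volume 0 y :=
      (hg.intervalIntegrable 0 y).congr_ae (ae_restrict_of_ae (hfg.mono fun _ h => h.symm))
    rw [← intervalIntegral.integral_congr_ae (hfg.mono fun u hu _ => hu),
      intervalIntegral.integral_eq_sub_of_hasDerivAt (fun u _ => hf u) hint, add_sub_cancel]
  rw [hf_eq]
  exact (hg.integral_hasStrictDerivAt 0 x).hasDerivAt.const_add (f 0)

section DotProduct

variable {ι : Type*} [Fintype ι]

theorem hasDerivAt_dotProduct {x y : ℝ → ι → ℝ} {x' y' : ι → ℝ} {t : ℝ}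
    (hx : HasDerivAt x x' t) (hy : HasDerivAt y y' t) :
    HasDerivAt (fun s => x s ⬝ᵥ y s) (x' ⬝ᵥ y t + x t ⬝ᵥ y') t := by
  simp only [dotProduct, ← Finset.sum_add_distrib]
  exact HasDerivAt.fun_sum fun i _ => (hasDerivAt_pi.1 hx i).fun_mul (hasDerivAt_pi.1 hy i)

theorem hasDerivAt_mulVec {M : ℝ → Matrix ι ι ℝ} {M' : Matrix ι ι ℝ} {y : ℝ → ι → ℝ}
    {y' : ι → ℝ} {t : ℝ} (hM : ∀ i j, HasDerivAt (fun s => M s i j) (M' i j) t)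
    (hy : HasDerivAt y y' t) :
    HasDerivAt (fun s => M s *ᵥ y s) (M' *ᵥ y t + M t *ᵥ y') t :=
  hasDerivAt_pi.2 fun i => by
    simp only [Pi.add_apply, mulVec, dotProduct, ← Finset.sum_add_distrib]
    exact HasDerivAt.fun_sum fun j _ => (hM i j).fun_mul (hasDerivAt_pi.1 hy j)

theorem mulVec_dotProduct_mulVec (A P : Matrix ι ι ℝ) (y : ι → ℝ) :
    (A *ᵥ y) ⬝ᵥ (P *ᵥ y) = y ⬝ᵥ ((Aᵀ * P) *ᵥ y) := by
  rw [← mulVec_mulVec, dotProduct_mulVec y, vecMul_transpose]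

theorem mul_dotProduct_self_le_of_posSemidef [DecidableEq ι] {P : Matrix ι ι ℝ} {c : ℝ}
    (h : (P - c • 1).PosSemidef) (y : ι → ℝ) : c * (y ⬝ᵥ y) ≤ y ⬝ᵥ (P *ᵥ y) := by
  have := h.dotProduct_mulVec_nonneg y
  simp only [star_trivial, sub_mulVec, smul_mulVec, one_mulVec, dotProduct_sub,
    dotProduct_smul, smul_eq_mul] at this
  linarith

theorem dotProduct_mulVec_le_of_posSemidef [DecidableEq ι] {P : Matrix ι ι ℝ} {c : ℝ}
    (h : (c • 1 - P).PosSemidef) (y : ι → ℝ) : y ⬝ᵥ (P *ᵥ y) ≤ c * (y ⬝ᵥ y) := by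
  have := h.dotProduct_mulVec_nonneg y
  simp only [star_trivial, sub_mulVec, smul_mulVec, one_mulVec, dotProduct_sub,
    dotProduct_smul, smul_eq_mul] at this
  linarith

theorem sq_norm_le_dotProduct_self (y : ι → ℝ) : ‖y‖ ^ 2 ≤ y ⬝ᵥ y := by
  have hsum : 0 ≤ y ⬝ᵥ y := Finset.sum_nonneg fun i _ => mul_self_nonneg (y i)
  suffices ‖y‖ ≤ √(y ⬝ᵥ y) by
    simpa [Real.sq_sqrt hsum] using pow_le_pow_left₀ (norm_nonneg y) this 2
  refine (pi_norm_le_iff_of_nonneg (Real.sqrt_nonneg _)).2 fun i => Real.abs_le_sqrt ?_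
  rw [sq]
  exact Finset.single_le_sum (f := fun j => y j * y j) (fun j _ => mul_self_nonneg (y j))
    (Finset.mem_univ i)

theorem dotProduct_self_le_card_mul_sq_norm (y : ι → ℝ) :
    y ⬝ᵥ y ≤ Fintype.card ι * ‖y‖ ^ 2 := by
  calc y ⬝ᵥ y = ∑ i, ‖y i‖ ^ 2 := by simp [dotProduct, sq]
    _ ≤ ∑ _i : ι, ‖y‖ ^ 2 := by gcongr with i; exact norm_le_pi_norm y i
    _ = Fintype.card ι * ‖y‖ ^ 2 := by simp

end DotProduct

theorem norm_mul_nonsing_inv_mulVec_le {ι K : Type*} [Fintype ι] [DecidableEq ι] [NormedField K]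
    (M : Matrix ι ι K) (x : ι → K) : ‖(M * M⁻¹) *ᵥ x‖ ≤ ‖x‖ := by
  by_cases hM : IsUnit M.det
  · rw [mul_nonsing_inv M hM, one_mulVec]
  · rw [nonsing_inv_apply_not_isUnit M hM, mul_zero, zero_mulVec, norm_zero]
    exact norm_nonneg x

section Lyapunov

variable {ι : Type*} [Fintype ι] [DecidableEq ι] {A P P' : ℝ → Matrix ι ι ℝ} {α β : ℝ}
  {y : ℝ → ι → ℝ}

theorem hasDerivAt_dotProduct_mulVec_of_lyapunov
    (hPderiv : ∀ t i j, HasDerivAt (fun s => P s i j) (P' t i j) t)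
    (hLyap : ∀ᵐ t ∂volume, P' t + P t * A t + (A t)ᵀ * P t + 1 = 0)
    (hy : ∀ t, HasDerivAt y (A t *ᵥ y t) t) (t : ℝ) :
    HasDerivAt (fun s => y s ⬝ᵥ (P s *ᵥ y s)) (-(y t ⬝ᵥ y t)) t := by
  have hderiv : ∀ t, HasDerivAt (fun s => y s ⬝ᵥ (P s *ᵥ y s))
      (y t ⬝ᵥ ((P' t + P t * A t + (A t)ᵀ * P t) *ᵥ y t)) t := fun t => by
    convert hasDerivAt_dotProduct (hy t) (hasDerivAt_mulVec (hPderiv t) (hy t)) using 1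
    rw [mulVec_dotProduct_mulVec, add_mulVec, add_mulVec, mulVec_mulVec]
    simp only [dotProduct_add]
    ring
  have hy_cont : Continuous y := continuous_iff_continuousAt.2 fun t => (hy t).continuousAt
  refine hasDerivAt_of_ae_eq_continuous hderiv (hLyap.mono fun t ht => ?_)
    (hy_cont.dotProduct hy_cont).neg t
  show y t ⬝ᵥ _ = -(y t ⬝ᵥ y t)
  rw [show P' t + P t * A t + (A t)ᵀ * P t = -1 from eq_neg_of_add_eq_zero_left ht,
    neg_mulVec, one_mulVec, dotProduct_neg]

theorem lyapunov_decay (hβ : 0 < β) (hPlow : ∀ t, (P t - α • 1).PosSemidef)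
    (hPup : ∀ t, (β • 1 - P t).PosSemidef)
    (hPderiv : ∀ t i j, HasDerivAt (fun s => P s i j) (P' t i j) t)
    (hLyap : ∀ᵐ t ∂volume, P' t + P t * A t + (A t)ᵀ * P t + 1 = 0)
    (hy : ∀ t, HasDerivAt y (A t *ᵥ y t) t) {s t : ℝ} (hst : s ≤ t) :
    α * (y t ⬝ᵥ y t) ≤ β * Real.exp (-(t - s) / β) * (y s ⬝ᵥ y s) := by
  set V := fun u => y u ⬝ᵥ (P u *ᵥ y u)
  have hW : Antitone fun u => Real.exp (u / β) * V u := by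
    refine antitone_of_hasDerivAt_nonpos (fun u => ((Real.hasDerivAt_exp _).comp u
      ((hasDerivAt_id u).div_const β)).mul
      (hasDerivAt_dotProduct_mulVec_of_lyapunov hPderiv hLyap hy u)) fun u => ?_
    have hV : V u / β ≤ y u ⬝ᵥ y u := by
      rw [div_le_iff₀ hβ, mul_comm]
      exact dotProduct_mulVec_le_of_posSemidef (hPup u) (y u)
    calc _ = Real.exp (u / β) * (V u / β - y u ⬝ᵥ y u) := by
          simp only [Function.comp_apply, id]; ring
      _ ≤ 0 := mul_nonpos_of_nonneg_of_nonpos (Real.exp_pos _).le (by linarith)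
  have hexp : Real.exp (-(t - s) / β) * Real.exp (t / β) = Real.exp (s / β) := by
    rw [← Real.exp_add]; ring_nf
  refine le_of_mul_le_mul_right ?_ (Real.exp_pos (t / β))
  calc α * (y t ⬝ᵥ y t) * Real.exp (t / β) ≤ Real.exp (t / β) * V t := by
        rw [mul_comm]; gcongr; exact mul_dotProduct_self_le_of_posSemidef (hPlow t) (y t)
    _ ≤ Real.exp (s / β) * V s := hW hst
    _ ≤ Real.exp (s / β) * (β * (y s ⬝ᵥ y s)) := by
        gcongr; exact dotProduct_mulVec_le_of_posSemidef (hPup s) (y s)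
    _ = β * Real.exp (-(t - s) / β) * (y s ⬝ᵥ y s) * Real.exp (t / β) := by
        rw [← hexp]; ring

theorem norm_le_of_lyapunov (hα : 0 < α) (hβ : 0 < β) (hPlow : ∀ t, (P t - α • 1).PosSemidef)
    (hPup : ∀ t, (β • 1 - P t).PosSemidef)
    (hPderiv : ∀ t i j, HasDerivAt (fun s => P s i j) (P' t i j) t)
    (hLyap : ∀ᵐ t ∂volume, P' t + P t * A t + (A t)ᵀ * P t + 1 = 0)
    (hy : ∀ t, HasDerivAt y (A t *ᵥ y t) t) {s t : ℝ} (hst : s ≤ t) :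
    ‖y t‖ ≤ √((Fintype.card ι + 1) * β / α) * Real.exp (-(2 * β)⁻¹ * (t - s)) * ‖y s‖ := by
  refine le_of_pow_le_pow_left₀ two_ne_zero (by positivity) ?_
  have hexp : Real.exp (-(2 * β)⁻¹ * (t - s)) ^ 2 = Real.exp (-(t - s) / β) := by
    rw [← Real.exp_nat_mul]; congr 1; field_simp; ring
  rw [mul_pow, mul_pow, Real.sq_sqrt (by positivity), hexp, ← mul_le_mul_iff_right₀ hα]
  calc α * ‖y t‖ ^ 2 ≤ α * (y t ⬝ᵥ y t) := by gcongr; exact sq_norm_le_dotProduct_self (y t)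
    _ ≤ β * Real.exp (-(t - s) / β) * (y s ⬝ᵥ y s) :=
      lyapunov_decay hβ hPlow hPup hPderiv hLyap hy hst
    _ ≤ β * Real.exp (-(t - s) / β) * ((Fintype.card ι + 1) * ‖y s‖ ^ 2) := by
      gcongr
      exact (dotProduct_self_le_card_mul_sq_norm (y s)).trans (by gcongr; linarith)
    _ = _ := by field_simp

end Lyapunov

theorem stmt_17_general {n : ℕ}
    (A : ℝ → Matrix (Fin n) (Fin n) ℝ)
    (Φ : ℝ → Matrix (Fin n) (Fin n) ℝ)
    (hΦ : ∀ (t : ℝ) (i j : Fin n),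
      HasDerivAt (fun s => Φ s i j) ((A t * Φ t) i j) t)
    (P P' : ℝ → Matrix (Fin n) (Fin n) ℝ)
    (α β : ℝ) (hα : 0 < α) (hβ : 0 < β)
    (hPlow : ∀ t : ℝ, (P t - α • (1 : Matrix (Fin n) (Fin n) ℝ)).PosSemidef)
    (hPup : ∀ t : ℝ, ((β • (1 : Matrix (Fin n) (Fin n) ℝ)) - P t).PosSemidef)
    (hPderiv : ∀ (t : ℝ) (i j : Fin n),
      HasDerivAt (fun s => P s i j) (P' t i j) t)
    (hLyap : ∀ᵐ t ∂(volume : Measure ℝ),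
      P' t + P t * A t + (A t)ᵀ * P t + 1 = 0) :
    ∃ K > (0:ℝ), ∃ lam > (0:ℝ), ∀ s t : ℝ, 0 ≤ s → s ≤ t →
      ∀ x : Fin n → ℝ,
        ‖(Φ t * (Φ s)⁻¹).mulVec x‖ ≤ K * Real.exp (-lam * (t - s)) * ‖x‖ := by
  refine ⟨√((n + 1) * β / α), by positivity, (2 * β)⁻¹, by positivity, fun s t _ hst x => ?_⟩
  set v := (Φ s)⁻¹ *ᵥ x
  have hsol : ∀ r, HasDerivAt (fun r => Φ r *ᵥ v) (A r *ᵥ (Φ r *ᵥ v)) r := fun r => by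
    simpa [mulVec_mulVec] using hasDerivAt_mulVec (hΦ r) (hasDerivAt_const r v)
  calc ‖(Φ t * (Φ s)⁻¹) *ᵥ x‖ = ‖Φ t *ᵥ v‖ := by rw [mulVec_mulVec]
    _ ≤ √((n + 1) * β / α) * Real.exp (-(2 * β)⁻¹ * (t - s)) * ‖Φ s *ᵥ v‖ := by
      simpa using norm_le_of_lyapunov hα hβ hPlow hPup hPderiv hLyap hsol hst
    _ ≤ √((n + 1) * β / α) * Real.exp (-(2 * β)⁻¹ * (t - s)) * ‖x‖ := by
      rw [mulVec_mulVec]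
      gcongr
      exact norm_mul_nonsing_inv_mulVec_le (Φ s) x

/-- Lyapunov stability criterion (deterministic case): if the periodic Lyapunov
equation `P' + PA + AᵀP + I = 0` admits a continuous `τ`-periodic solution with
uniform bounds `αI ≤ P(t) ≤ βI`, then the transition matrix of `x' = Ax` decays
exponentially. -/
theorem stmt_17 {n : ℕ} (τ : ℝ) (hτ : 0 < τ)
    (A : ℝ → Matrix (Fin n) (Fin n) ℝ)
    (hAmeas : ∀ i j, Measurable fun t => A t i j)
    (hAbd : ∃ C : ℝ, ∀ (t : ℝ) (i j : Fin n), |A t i j| ≤ C)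
    (hAper : ∀ t : ℝ, A (t + τ) = A t)
    (Φ : ℝ → Matrix (Fin n) (Fin n) ℝ)
    (hΦ : ∀ (t : ℝ) (i j : Fin n),
      HasDerivAt (fun s => Φ s i j) ((A t * Φ t) i j) t)
    (hΦ0 : Φ 0 = 1)
    (P P' : ℝ → Matrix (Fin n) (Fin n) ℝ)
    (hPcont : Continuous P)
    (hPper : ∀ t : ℝ, P (t + τ) = P t)
    (hPsymm : ∀ t : ℝ, (P t).IsSymm)
    (α β : ℝ) (hα : 0 < α) (hβ : 0 < β)
    (hPlow : ∀ t : ℝ, (P t - α • (1 : Matrix (Fin n) (Fin n) ℝ)).PosSemidef)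
    (hPup : ∀ t : ℝ, ((β • (1 : Matrix (Fin n) (Fin n) ℝ)) - P t).PosSemidef)
    (hPderiv : ∀ (t : ℝ) (i j : Fin n),
      HasDerivAt (fun s => P s i j) (P' t i j) t)
    (hLyap : ∀ᵐ t ∂(volume : Measure ℝ),
      P' t + P t * A t + (A t)ᵀ * P t + 1 = 0) :
    ∃ K > (0:ℝ), ∃ lam > (0:ℝ), ∀ s t : ℝ, 0 ≤ s → s ≤ t →
      ∀ x : Fin n → ℝ,
        ‖(Φ t * (Φ s)⁻¹).mulVec x‖ ≤ K * Real.exp (-lam * (t - s)) * ‖x‖ :=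
  stmt_17_general A Φ hΦ P P' α β hα hβ hPlow hPup hPderiv hLyap
end

section
/- Let f : [0, T] → ℝ be continuous with f(t) ≤ K e^{-λ t} + K e^{-λ(T-t)} + K ∫₀ᵗ e^{-λ(T-s)} f(s) ds for all t ∈ [0, T], with f nonnegative and K, λ > 0 independent of T, and KT e^{-λT} bounded uniformly in T. Then there exists K' > 0 independent of T such that f(t) ≤ K'(e^{-λ t} + e^{-λ(T-t)}) for all t ∈ [0, T]. -/
/-!
With `k s = exp (-λ (T - s))` and `F t = ∫₀ᵗ k f`, the hypothesis reads `F' = k f ≤ K k F + k a`,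
where `a t = K (e^{-λt} + e^{-λ(T-t)}) ≤ 2K` on `[0, T]`. As `k / λ` is an antiderivative of `k`,
`B = exp ((K / λ) k) · (2K / λ) k` satisfies `B' ≥ K k B + 2K k`, so `F ≤ B ≤ (2K / λ) e^{K/λ} k`.
The Gronwall factor stays below `e^{K/λ}` because the kernel has total mass at most `1 / λ`,
whatever `T` is.
-/

open Set Real intervalIntegral

theorem ContinuousOn.exists_continuous_eqOn_Icc {α : Type*} [TopologicalSpace α]
    {f : ℝ → α} {a b : ℝ} (hab : a ≤ b) (hf : ContinuousOn f (Icc a b)) :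
    ∃ g : ℝ → α, Continuous g ∧ EqOn g f (Icc a b) :=
  ⟨IccExtend hab ((Icc a b).domRestrict f),
    continuous_IccExtend_iff.mpr (continuousOn_iff_continuous_domRestrict.mp hf),
    fun _ hx => IccExtend_of_mem hab _ hx⟩

theorem le_exp_mul_of_hasDerivAt_le {F F' Φ c ψ ψ' : ℝ → ℝ} {a b : ℝ}
    (hF : ∀ x ∈ Icc a b, HasDerivAt F (F' x) x)
    (hΦ : ∀ x ∈ Icc a b, HasDerivAt Φ (c x) x)
    (hψ : ∀ x ∈ Icc a b, HasDerivAt ψ (ψ' x) x)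
    (ha : F a ≤ exp (Φ a) * ψ a)
    (hF' : ∀ x ∈ Ico a b, F' x ≤ c x * F x + exp (Φ x) * ψ' x) :
    ∀ x ∈ Icc a b, F x ≤ exp (Φ x) * ψ x := by
  have hG : ∀ x ∈ Icc a b, HasDerivAt (fun y => exp (-Φ y) * F y)
      (exp (-Φ x) * (F' x - c x * F x)) x := fun x hx =>
    (((hΦ x hx).fun_neg.exp).mul (hF x hx)).congr_deriv (by ring)
  have hG' : ∀ x ∈ Ico a b, exp (-Φ x) * (F' x - c x * F x) ≤ ψ' x := fun x hx => by
    calc exp (-Φ x) * (F' x - c x * F x) ≤ exp (-Φ x) * (exp (Φ x) * ψ' x) := by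
          gcongr; linarith [hF' x hx]
      _ = ψ' x := by rw [← mul_assoc, ← exp_add, neg_add_cancel, exp_zero, one_mul]
  have hGa : exp (-Φ a) * F a ≤ ψ a := by
    rwa [exp_neg, inv_mul_le_iff₀ (exp_pos _)]
  intro x hx
  have hGx := image_le_of_deriv_right_le_deriv_boundary
    (fun x hx => (hG x hx).continuousAt.continuousWithinAt)
    (fun x hx => (hG x (Ico_subset_Icc_self hx)).hasDerivWithinAt) hGa
    (fun x hx => (hψ x hx).continuousAt.continuousWithinAt)
    (fun x hx => (hψ x (Ico_subset_Icc_self hx)).hasDerivWithinAt) hG' hx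
  rwa [exp_neg, inv_mul_le_iff₀ (exp_pos _)] at hGx

theorem hasDerivAt_exp_neg_mul_sub (lam T s : ℝ) :
    HasDerivAt (fun s => exp (-lam * (T - s))) (lam * exp (-lam * (T - s))) s :=
  (((hasDerivAt_id' s).const_sub T).const_mul (-lam)).exp.congr_deriv (by ring)

theorem integral_exp_neg_mul_sub_mul_le {K lam T : ℝ} (hK : 0 ≤ K) (hlam : 0 < lam)
    {g : ℝ → ℝ} (hg : Continuous g)
    (hbound : ∀ t ∈ Icc 0 T, g t ≤ K * exp (-lam * t) + K * exp (-lam * (T - t)) +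
      K * ∫ s in (0 : ℝ)..t, exp (-lam * (T - s)) * g s) :
    ∀ t ∈ Icc 0 T, ∫ s in (0 : ℝ)..t, exp (-lam * (T - s)) * g s ≤
      2 * K / lam * exp (K / lam) * exp (-lam * (T - t)) := by
  set k : ℝ → ℝ := fun s => exp (-lam * (T - s)) with hk
  set F : ℝ → ℝ := fun t => ∫ s in (0 : ℝ)..t, k s * g s with hF
  have hk_cont : Continuous k := by fun_prop
  have hk_le_one : ∀ s ∈ Icc 0 T, k s ≤ 1 := fun s hs =>
    exp_le_one_iff.mpr (by nlinarith [hs.2])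
  have hF' : ∀ x ∈ Ico 0 T, k x * g x ≤ K * k x * F x + exp (K / lam * k x) * (2 * K * k x) := by
    intro x hx
    have hx' := Ico_subset_Icc_self hx
    have hex : exp (-lam * x) ≤ 1 := exp_le_one_iff.mpr (by nlinarith [hx.1])
    calc k x * g x ≤ k x * (K * exp (-lam * x) + K * k x + K * F x) := by
          gcongr; exact hbound x hx'
      _ = K * k x * F x + K * k x * (exp (-lam * x) + k x) := by ring
      _ ≤ K * k x * F x + K * k x * 2 := by gcongr; linarith [hk_le_one x hx']
      _ ≤ K * k x * F x + exp (K / lam * k x) * (2 * K * k x) := by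
          have := le_mul_of_one_le_left (b := 2 * K * k x) (by positivity)
            (one_le_exp (by positivity : 0 ≤ K / lam * k x))
          linarith
  have hcmp := le_exp_mul_of_hasDerivAt_le (F := F) (Φ := fun s => K / lam * k s)
    (ψ := fun s => 2 * K / lam * k s)
    (fun x _ => (hk_cont.mul hg).integral_hasStrictDerivAt 0 x |>.hasDerivAt)
    (fun x _ => ((hasDerivAt_exp_neg_mul_sub lam T x).const_mul (K / lam)).congr_deriv
      (by simp only [hk]; field_simp))
    (fun x _ => ((hasDerivAt_exp_neg_mul_sub lam T x).const_mul (2 * K / lam)).congr_deriv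
      (by simp only [hk]; field_simp))
    (by simp only [hF, integral_same]; positivity) hF'
  intro t ht
  calc F t ≤ exp (K / lam * k t) * (2 * K / lam * k t) := hcmp t ht
    _ ≤ exp (K / lam) * (2 * K / lam * k t) := by
        gcongr; exact mul_le_of_le_one_right (by positivity) (hk_le_one t ht)
    _ = 2 * K / lam * exp (K / lam) * exp (-lam * (T - t)) := by ring

/-- Gronwall-type estimate with an exponentially concentrated kernel, uniform in `T`. -/
theorem stmt_19 (K lam : ℝ) (hK : 0 < K) (hlam : 0 < lam) :
    ∃ K' > (0:ℝ), ∀ T : ℝ, 0 < T → ∀ f : ℝ → ℝ,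
      ContinuousOn f (Set.Icc 0 T) →
      (∀ t ∈ Set.Icc (0:ℝ) T, 0 ≤ f t) →
      (∀ t ∈ Set.Icc (0:ℝ) T,
        f t ≤ K * Real.exp (-lam * t) + K * Real.exp (-lam * (T - t)) +
          K * ∫ s in (0:ℝ)..t, Real.exp (-lam * (T - s)) * f s) →
      ∀ t ∈ Set.Icc (0:ℝ) T,
        f t ≤ K' * (Real.exp (-lam * t) + Real.exp (-lam * (T - t))) := by
  refine ⟨K + K * (2 * K / lam * exp (K / lam)), by positivity, ?_⟩
  intro T hT f hf _ hbound t ht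
  obtain ⟨g, hg, hgf⟩ := hf.exists_continuous_eqOn_Icc hT.le
  have hint : ∀ t ∈ Icc 0 T, ∫ s in (0 : ℝ)..t, exp (-lam * (T - s)) * g s =
      ∫ s in (0 : ℝ)..t, exp (-lam * (T - s)) * f s := fun t ht =>
    integral_congr fun s hs => by
      rw [uIcc_of_le ht.1] at hs
      rw [hgf ⟨hs.1, hs.2.trans ht.2⟩]
  have hF := integral_exp_neg_mul_sub_mul_le hK.le hlam hg
    (fun t ht => by rw [hgf ht, hint t ht]; exact hbound t ht) t ht
  rw [hint t ht] at hF
  calc f t ≤ K * exp (-lam * t) + K * exp (-lam * (T - t)) +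
        K * ∫ s in (0 : ℝ)..t, exp (-lam * (T - s)) * f s := hbound t ht
    _ ≤ K * exp (-lam * t) + K * exp (-lam * (T - t)) +
        K * (2 * K / lam * exp (K / lam) * exp (-lam * (T - t))) := by gcongr
    _ ≤ (K + K * (2 * K / lam * exp (K / lam))) * (exp (-lam * t) + exp (-lam * (T - t))) := by
        have : 0 ≤ K * (2 * K / lam * exp (K / lam)) * exp (-lam * t) := by positivity
        linear_combination this
end
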